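/- Let d be a positive integer, let Box ⊆ ℝ^d be a full-dimensional lattice polytope with 0 in its interior, and let f be an integral concave piecewise-affine function on Box which is at height one. Suppose f(x) = 1 for every point x ∈ Box lying on a coordinate axis, i.e., for every x ∈ Box of the form x = α·e_j with α ∈ ℝ and e_j a standard basis vector. Then f(x) = 1 for all x ∈ Box. -/

import Mathlib

open scoped BigOperators

noncomputable section

/-- Embedding of a lattice point of `ℤ^d × ℤ` into `ℝ^d × ℝ`. -/
def latticeEmbed (d : ℕ) (p : (Fin d → ℤ) × ℤ) : (Fin d → ℝ) × ℝ :=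
  (fun i => (p.1 i : ℝ), (p.2 : ℝ))

/-- `Box ⊆ ℝ^d` is a lattice polytope: the convex hull of a finite set of lattice points. -/
def IsLatticePolytope (d : ℕ) (Box : Set (Fin d → ℝ)) : Prop :=
  ∃ S : Finset (Fin d → ℤ),
    Box = convexHull ℝ ((fun v : Fin d → ℤ => fun i => (v i : ℝ)) '' (S : Set (Fin d → ℤ)))

/-- The pairing of `x ∈ ℝ^d` with an integral vector `u ∈ ℤ^d`. -/
def dotZ (d : ℕ) (x : Fin d → ℝ) (u : Fin d → ℤ) : ℝ := ∑ i, x i * (u i : ℝ)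

/-- `f` is an integral concave piecewise-affine function on `Box`: there is a finite set
`S ⊆ ℤ^d × ℤ` such that `Box` is the projection of `conv S` and `f x` is the largest `t`
with `(x, t) ∈ conv S`. -/
def IsICPA (d : ℕ) (Box : Set (Fin d → ℝ)) (f : (Fin d → ℝ) → ℝ) : Prop :=
  ∃ S : Finset ((Fin d → ℤ) × ℤ),
    Prod.fst '' (convexHull ℝ (latticeEmbed d '' (S : Set ((Fin d → ℤ) × ℤ)))) = Box ∧
    ∀ x ∈ Box,
      IsGreatest {t : ℝ | (x, t) ∈ convexHull ℝ (latticeEmbed d '' (S : Set ((Fin d → ℤ) × ℤ)))}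
        (f x)

/-- Every facet of the graph of `f` lies at height one. -/
def AtHeightOne (d : ℕ) (Box : Set (Fin d → ℝ)) (f : (Fin d → ℝ) → ℝ) : Prop :=
  ∀ x ∈ Box, ∃ (u : Fin d → ℤ) (m : ℤ),
    |dotZ d x u + (m : ℝ) * f x| = 1 ∧
    ∀ y ∈ Box, dotZ d y u + (m : ℝ) * f y ≤ dotZ d x u + (m : ℝ) * f x

/-- A combinatorial divisorial polytope (CDP) with base in `ℝ^d`. -/
structure CDP (d : ℕ) where
  box : Set (Fin d → ℝ)
  funcs : List ((Fin d → ℝ) → ℝ)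
  lattice : IsLatticePolytope d box
  fullDim : (interior box).Nonempty
  icpa : ∀ f ∈ funcs, IsICPA d box f
  posSum : ∀ x ∈ interior box, 0 < (funcs.map (fun f => f x)).sum

/-- Two functions agree on a set. -/
def EqOnBox (d : ℕ) (B : Set (Fin d → ℝ)) (f g : (Fin d → ℝ) → ℝ) : Prop :=
  ∀ x ∈ B, f x = g x

/-- Move (i): addition of the zero function. -/
def MoveZero (d : ℕ) (P Q : CDP d) : Prop :=
  Q.box = P.box ∧
    List.Forall₂ (EqOnBox d P.box) Q.funcs (P.funcs ++ [fun _ => (0 : ℝ)])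

/-- Move (ii): permutation of the functions. -/
def MovePerm (d : ℕ) (P Q : CDP d) : Prop :=
  Q.box = P.box ∧ ∃ L, List.Perm L P.funcs ∧ List.Forall₂ (EqOnBox d P.box) Q.funcs L

/-- Move (iii): integral affine transformation of the base. -/
def MoveAffine (d : ℕ) (P Q : CDP d) : Prop :=
  ∃ (A B : Matrix (Fin d) (Fin d) ℤ) (t : Fin d → ℤ),
    A * B = 1 ∧ B * A = 1 ∧
    Q.box = (fun x : Fin d → ℝ => fun i => (∑ j, (A i j : ℝ) * x j) + (t i : ℝ)) '' P.box ∧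
    List.Forall₂ (EqOnBox d Q.box) Q.funcs
      (P.funcs.map (fun f => f ∘ fun x : Fin d → ℝ => fun i => ∑ j, (B i j : ℝ) * (x j - (t j : ℝ))))

/-- Move (iv): translation by integers summing to zero. -/
def MoveTranslate (d : ℕ) (P Q : CDP d) : Prop :=
  Q.box = P.box ∧ ∃ α : List ℤ, α.length = P.funcs.length ∧ α.sum = 0 ∧
    List.Forall₂ (EqOnBox d P.box) Q.funcs
      (List.zipWith (fun f (a : ℤ) => fun x => f x + (a : ℝ)) P.funcs α)

/-- Move (v): shearing by a covector with integral coefficients summing to zero. -/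
def MoveShear (d : ℕ) (P Q : CDP d) : Prop :=
  Q.box = P.box ∧ ∃ (v : Fin d → ℤ) (β : List ℤ), β.length = P.funcs.length ∧ β.sum = 0 ∧
    List.Forall₂ (EqOnBox d P.box) Q.funcs
      (List.zipWith (fun f (b : ℤ) => fun x => f x + (b : ℝ) * dotZ d x v) P.funcs β)

/-- One elementary move between CDPs. -/
def CDPMove (d : ℕ) (P Q : CDP d) : Prop :=
  MoveZero d P Q ∨ MovePerm d P Q ∨ MoveAffine d P Q ∨ MoveTranslate d P Q ∨ MoveShear d P Q

/-- Equivalence of CDPs: the smallest equivalence relation generated by the moves. -/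
def CDPEquiv (d : ℕ) : CDP d → CDP d → Prop := Relation.EqvGen (CDPMove d)

/-- The on-the-nose Fano conditions for a CDP. -/
def IsFanoWitness (d : ℕ) (P : CDP d) : Prop :=
  ∃ a : List ℤ, a.sum = -2 ∧
    (0 : Fin d → ℝ) ∈ interior P.box ∧
    List.Forall₂ (fun f (ai : ℤ) =>
      AtHeightOne d P.box (fun x => f x + (ai : ℝ) + 1) ∧ 0 < f 0 + (ai : ℝ) + 1)
      P.funcs a ∧
    ∀ x ∈ frontier P.box,
      (P.funcs.map (fun f => f x)).sum = 0 ∨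
      ∃ u : Fin d → ℤ, dotZ d x u = 1 ∧ ∀ y ∈ P.box, dotZ d y u ≤ 1

/-- A CDP is Fano if it is equivalent to one satisfying the Fano conditions. -/
def IsFano (d : ℕ) (P : CDP d) : Prop := ∃ Q : CDP d, CDPEquiv d P Q ∧ IsFanoWitness d Q

/-- A CDP is toric if it is equivalent to one with at most two functions. -/
def IsToric (d : ℕ) (P : CDP d) : Prop := ∃ Q : CDP d, CDPEquiv d P Q ∧ Q.funcs.length ≤ 2

/-- `f` agrees on `Box` with an affine function with integral slope and constant. -/
def IsIntegralAffineOn (d : ℕ) (Box : Set (Fin d → ℝ)) (f : (Fin d → ℝ) → ℝ) : Prop :=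
  ∃ (u : Fin d → ℤ) (c : ℤ), ∀ x ∈ Box, f x = dotZ d x u + (c : ℝ)

/-- Normalized Fano data on `Box`: the translated functions `Ψᵢ' = Ψᵢ + aᵢ + 1` of a
normalized Fano CDP. -/
def NormalizedFanoData (d n : ℕ) (Box : Set (Fin d → ℝ))
    (f : Fin n → (Fin d → ℝ) → ℝ) : Prop :=
  (∀ i, IsICPA d Box (f i)) ∧
  (∀ i, AtHeightOne d Box (f i)) ∧
  (∀ i, 0 < f i 0) ∧
  (∀ i, ¬ IsIntegralAffineOn d Box (f i)) ∧
  (∀ x ∈ Box, (n : ℝ) - 2 ≤ ∑ i, f i x) ∧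
  (∀ x ∈ interior Box, (n : ℝ) - 2 < ∑ i, f i x) ∧
  (∀ x ∈ frontier Box,
    (∑ i, f i x) = (n : ℝ) - 2 ∨
    ∃ u : Fin d → ℤ, dotZ d x u = 1 ∧ ∀ y ∈ Box, dotZ d y u ≤ 1)

/-- `α_v = min{1, max{α ≥ 0 : ±αv ∈ Box}}`. -/
def alphaV (d : ℕ) (Box : Set (Fin d → ℝ)) (v : Fin d → ℤ) : ℝ :=
  min 1 (sSup {α : ℝ | 0 ≤ α ∧ (fun i => α * (v i : ℝ)) ∈ Box ∧
    (fun i => -(α * (v i : ℝ))) ∈ Box})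

/-- A primitive integral vector: the gcd of its coordinates is 1. -/
def IsPrimitive (d : ℕ) (v : Fin d → ℤ) : Prop := Finset.univ.gcd v = 1

/-- `f` restricted to `Box ∩ ℝ·v` is affine. -/
def AffineOnLine (d : ℕ) (Box : Set (Fin d → ℝ)) (v : Fin d → ℤ)
    (f : (Fin d → ℝ) → ℝ) : Prop :=
  ∃ s c : ℝ, ∀ t : ℝ, (fun i => t * (v i : ℝ)) ∈ Box →
    f (fun i => t * (v i : ℝ)) = s * t + c

/-- The interval `[a,b]` as a subset of `ℝ¹ = (Fin 1 → ℝ)`. -/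
def intervalBox (a b : ℤ) : Set (Fin 1 → ℝ) := {p : Fin 1 → ℝ | (a : ℝ) ≤ p 0 ∧ p 0 ≤ (b : ℝ)}

/-- The `d`-dimensional cross polytope `conv{±e₁, …, ±e_d}`. -/
def crossPolytope (d : ℕ) : Set (Fin d → ℝ) :=
  convexHull ℝ {x : Fin d → ℝ | ∃ j : Fin d, x = Pi.single j 1 ∨ x = -Pi.single j 1}

/-!
Concavity of `f` comes from the ICPA structure. The key observation: if a height-one
supporting form `y ↦ ⟨y, u⟩ + m f(y)` of the graph takes the value `m` (its value at `0`) as its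
maximum, then `u = 0`, because `f = 1` on the axes near `0` forces `⟨±δ eⱼ, u⟩ ≤ 0`.
Applied at `0`, this gives `f ≤ 1` or `f ≥ 1` on `Box`; in the second case concavity and the
interior minimum at `0` force `f ≡ 1`. In the first case, if `f x < 1` then, `conv S` being
closed, already `f (t x) < 1` for some `0 < t < 1`. The height-one form at `t x` attains
the value `m` there (for `m ≤ 0` by its convexity along `[0, x]`, for `m ≥ 1` because its
value is `±1` and at least `m`), so `u = 0` and `f (t x) = 1`, a contradiction.
-/

open Set Filter Topology

section Segment

variable {E : Type*} [AddCommGroup E] [Module ℝ E]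

lemma smul_mem_openSegment_smul {a b t : ℝ} (hat : a < t) (htb : t < b) (x : E) :
    t • x ∈ openSegment ℝ (a • x) (b • x) := by
  have hba : 0 < b - a := by linarith
  refine ⟨(b - t) / (b - a), (t - a) / (b - a), by bound, by bound, by field_simp; ring, ?_⟩
  rw [smul_smul, smul_smul, ← add_smul]
  congr 1
  field_simp
  ring

lemma exists_pos_smul_mem_of_zero_mem_interior [TopologicalSpace E] [ContinuousSMul ℝ E]
    {s : Set E} (h0 : (0 : E) ∈ interior s) (v : E) :
    ∃ δ : ℝ, 0 < δ ∧ δ • v ∈ s ∧ (-δ) • v ∈ s := by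
  have hev : ∀ᶠ α in 𝓝 (0 : ℝ), α • v ∈ s :=
    ((continuous_id.smul continuous_const).tendsto' 0 0 (zero_smul ℝ v)).eventually
      (mem_interior_iff_mem_nhds.mp h0)
  obtain ⟨ε, hε, hball⟩ := Metric.eventually_nhds_iff.mp hev
  refine ⟨ε / 2, half_pos hε, hball ?_, hball ?_⟩ <;>
    simp [abs_of_pos hε, half_lt_self hε]

lemma ConcaveOn.eq_of_isMinOn_of_zero_mem_interior [TopologicalSpace E] [ContinuousSMul ℝ E]
    {s : Set E} {g : E → ℝ} (hg : ConcaveOn ℝ s g) (h0 : (0 : E) ∈ interior s)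
    (hmin : IsMinOn g s 0) {x : E} (hx : x ∈ s) : g x = g 0 := by
  obtain ⟨δ, hδ, -, hδx⟩ := exists_pos_smul_mem_of_zero_mem_interior h0 x
  have hseg : (0 : E) ∈ openSegment ℝ x ((-δ) • x) := by
    simpa [openSegment_symm] using smul_mem_openSegment_smul (neg_lt_zero.mpr hδ) one_pos x
  exact le_antisymm (hg.left_le_of_le_right hx hδx hseg (hmin hδx)) (hmin hx)

end Segment

section LatticeFunctions

variable {d : ℕ} {Box : Set (Fin d → ℝ)} {f : (Fin d → ℝ) → ℝ}

lemma dotZ_eq_dotProduct (x : Fin d → ℝ) (u : Fin d → ℤ) :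
    dotZ d x u = x ⬝ᵥ fun i => (u i : ℝ) := rfl

@[simp] lemma dotZ_zero_left (u : Fin d → ℤ) : dotZ d 0 u = 0 := by
  simp [dotZ_eq_dotProduct]

@[simp] lemma dotZ_zero_right (x : Fin d → ℝ) : dotZ d x 0 = 0 := by
  simp [dotZ_eq_dotProduct]

lemma dotZ_single (j : Fin d) (α : ℝ) (u : Fin d → ℤ) :
    dotZ d (Pi.single j α) u = α * u j := by
  simp [dotZ_eq_dotProduct]

lemma convexOn_dotZ_add_mul (hf : ConcaveOn ℝ Box f) (u : Fin d → ℤ) {m : ℝ} (hm : m ≤ 0) :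
    ConvexOn ℝ Box fun y => dotZ d y u + m * f y := by
  have hlin : ConvexOn ℝ Box fun y => dotZ d y u :=
    ((dotProductBilin ℝ ℝ).flip fun i => (u i : ℝ)).convexOn hf.1
  refine (hlin.add (hf.neg.smul (neg_nonneg.mpr hm))).congr fun y _ => ?_
  simp

end LatticeFunctions

namespace IsICPA

variable {d : ℕ} {Box : Set (Fin d → ℝ)} {f : (Fin d → ℝ) → ℝ}

lemma convex (hf : IsICPA d Box f) : Convex ℝ Box := by
  obtain ⟨S, hproj, -⟩ := hf
  rw [← hproj]
  exact (convex_convexHull ℝ _).linear_image (LinearMap.fst ℝ (Fin d → ℝ) ℝ)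

lemma concaveOn (hf : IsICPA d Box f) : ConcaveOn ℝ Box f := by
  refine ⟨hf.convex, fun x hx y hy a b ha hb hab => ?_⟩
  obtain ⟨S, hproj, hgr⟩ := hf
  have hcomb := convex_convexHull ℝ _ (hgr x hx).1 (hgr y hy).1 ha hb hab
  have hmem : a • x + b • y ∈ Box := hproj ▸ ⟨_, hcomb, rfl⟩
  exact (hgr _ hmem).2 hcomb

lemma le_of_tendsto (hf : IsICPA d Box f) {α : Type*} {l : Filter α} [l.NeBot]
    {g : α → Fin d → ℝ} (hg : ∀ᶠ i in l, g i ∈ Box) {x : Fin d → ℝ} (hx : x ∈ Box) {a : ℝ}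
    (hlim : Tendsto (fun i => (g i, f (g i))) l (𝓝 (x, a))) : a ≤ f x := by
  obtain ⟨S, -, hgr⟩ := hf
  have hclosed : IsClosed (convexHull ℝ (latticeEmbed d '' (S : Set ((Fin d → ℤ) × ℤ)))) :=
    (S.finite_toSet.image _).isClosed_convexHull (𝕜 := ℝ)
  exact (hgr x hx).2 (hclosed.mem_of_tendsto hlim (hg.mono fun i hi => (hgr _ hi).1))

lemma exists_smul_lt (hf : IsICPA d Box f) (h0 : (0 : Fin d → ℝ) ∈ Box) {a : ℝ}
    (hle : ∀ y ∈ Box, f y ≤ a) {x : Fin d → ℝ} (hx : x ∈ Box) (hfx : f x < a) :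
    ∃ t ∈ Ioo (0 : ℝ) 1, f (t • x) < a := by
  by_contra! hge
  have hev : ∀ᶠ t in 𝓝[<] (1 : ℝ), t • x ∈ Box ∧ f (t • x) = a := by
    filter_upwards [Ioo_mem_nhdsLT one_pos] with t ht
    have hmem := hf.convex.smul_mem_of_zero_mem h0 hx (Ioo_subset_Icc_self ht)
    exact ⟨hmem, le_antisymm (hle _ hmem) (hge t ht)⟩
  have hlim : Tendsto (fun t : ℝ => (t • x, f (t • x))) (𝓝[<] 1) (𝓝 (x, a)) := by
    refine .prodMk_nhds ?_ (tendsto_const_nhds.congr' (hev.mono fun t ht => ht.2.symm))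
    exact ((continuous_id.smul continuous_const).tendsto' (1 : ℝ) x (one_smul ℝ x)).mono_left
      nhdsWithin_le_nhds
  exact (hf.le_of_tendsto (hev.mono fun t ht => ht.1) hx hlim).not_gt hfx

end IsICPA

section HeightOne

variable {d : ℕ} {Box : Set (Fin d → ℝ)} {f : (Fin d → ℝ) → ℝ}

lemma eq_zero_of_forall_dotZ_add_mul_le (h0 : (0 : Fin d → ℝ) ∈ interior Box)
    (hax : ∀ x ∈ Box, (∃ (j : Fin d) (α : ℝ), x = Pi.single j α) → f x = 1)
    {u : Fin d → ℤ} {m : ℝ} (hle : ∀ y ∈ Box, dotZ d y u + m * f y ≤ m) : u = 0 := by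
  funext j
  have hsingle : ∀ α : ℝ, Pi.single j α ∈ Box → α * u j ≤ 0 := by
    intro α hα
    have h := hle _ hα
    rwa [hax _ hα ⟨j, α, rfl⟩, dotZ_single, mul_one, add_le_iff_nonpos_left] at h
  obtain ⟨δ, hδ, hpos, hneg⟩ := exists_pos_smul_mem_of_zero_mem_interior h0 (Pi.single j (1 : ℝ))
  simp only [← Pi.single_smul, smul_eq_mul, mul_one] at hpos hneg
  have h1 := hsingle δ hpos
  have h2 := hsingle (-δ) hneg
  exact_mod_cast (show (u j : ℝ) = 0 by nlinarith)

lemma dotZ_add_mul_eq_of_forall_le (hf : ConcaveOn ℝ Box f) (hf0 : f 0 = 1)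
    (h0 : (0 : Fin d → ℝ) ∈ Box) {x : Fin d → ℝ} (hx : x ∈ Box) {t : ℝ} (ht : t ∈ Ioo (0 : ℝ) 1)
    {u : Fin d → ℤ} {m : ℤ}
    (hmax : ∀ y ∈ Box, dotZ d y u + m * f y ≤ dotZ d (t • x) u + m * f (t • x))
    (hone : |dotZ d (t • x) u + m * f (t • x)| = 1) :
    dotZ d (t • x) u + m * f (t • x) = m := by
  have hL0 : dotZ d 0 u + m * f 0 = m := by simp [hf0]
  refine le_antisymm ?_ (hL0.symm.trans_le (hmax 0 h0))
  rcases le_or_gt m 0 with hm | hm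
  · have hseg : t • x ∈ openSegment ℝ 0 x := by
      simpa using smul_mem_openSegment_smul ht.1 ht.2 x
    exact ((convexOn_dotZ_add_mul hf u (by exact_mod_cast hm)).le_left_of_right_le
      h0 hx hseg (hmax x hx)).trans_eq hL0
  · calc _ ≤ |dotZ d (t • x) u + m * f (t • x)| := le_abs_self _
      _ = 1 := hone
      _ ≤ m := by exact_mod_cast hm

theorem AtHeightOne.eq_one_of_le_one (hht : AtHeightOne d Box f) (hicpa : IsICPA d Box f)
    (h0 : (0 : Fin d → ℝ) ∈ interior Box)
    (hax : ∀ x ∈ Box, (∃ (j : Fin d) (α : ℝ), x = Pi.single j α) → f x = 1)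
    (hf0 : f 0 = 1) (hle : ∀ y ∈ Box, f y ≤ 1) : ∀ x ∈ Box, f x = 1 := by
  have h0' := interior_subset h0
  intro x hx
  by_contra hne
  obtain ⟨t, ht, hft⟩ := hicpa.exists_smul_lt h0' hle hx ((hle x hx).lt_of_ne hne)
  obtain ⟨u, m, hone, hmax⟩ :=
    hht _ (hicpa.convex.smul_mem_of_zero_mem h0' hx (Ioo_subset_Icc_self ht))
  have hval := dotZ_add_mul_eq_of_forall_le hicpa.concaveOn hf0 h0' hx ht hmax hone
  rw [hval] at hone hmax
  obtain rfl := eq_zero_of_forall_dotZ_add_mul_le h0 hax hmax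
  simp only [dotZ_zero_right, zero_add] at hval
  have hm : (m : ℝ) ≠ 0 := by rintro h; simp [h] at hone
  exact hft.ne (mul_left_cancel₀ hm (hval.trans (mul_one _).symm))

end HeightOne

theorem identically_one_of_one_on_axes_general
    (d : ℕ) (hd : 0 < d) (Box : Set (Fin d → ℝ))
    (h0 : (0 : Fin d → ℝ) ∈ interior Box)
    (f : (Fin d → ℝ) → ℝ) (hicpa : IsICPA d Box f) (hht : AtHeightOne d Box f)
    (hax : ∀ x ∈ Box, (∃ (j : Fin d) (α : ℝ), x = Pi.single j α) → f x = 1) :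
    ∀ x ∈ Box, f x = 1 := by
  have h0' := interior_subset h0
  have hf0 : f 0 = 1 := hax 0 h0' ⟨⟨0, hd⟩, 0, by simp⟩
  obtain ⟨u, m, hone, hmax⟩ := hht 0 h0'
  simp only [dotZ_zero_left, hf0, zero_add, mul_one] at hone hmax
  obtain rfl := eq_zero_of_forall_dotZ_add_mul_le h0 hax hmax
  simp only [dotZ_zero_right, zero_add] at hmax
  rcases (abs_eq zero_le_one).mp hone with hm | hm
  · exact hht.eq_one_of_le_one hicpa h0 hax hf0 fun y hy => by simpa [hm] using hmax y hy
  · intro x hx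
    refine (hicpa.concaveOn.eq_of_isMinOn_of_zero_mem_interior h0 ?_ hx).trans hf0
    refine isMinOn_iff.mpr fun y hy => ?_
    have h := hmax y hy
    rw [hm] at h
    linarith

/-- If an integral concave piecewise-affine function at height one equals `1` at every point
of `Box` on a coordinate axis, then it is identically `1` on `Box`. -/
theorem identically_one_of_one_on_axes
    (d : ℕ) (hd : 0 < d) (Box : Set (Fin d → ℝ)) (hlat : IsLatticePolytope d Box)
    (h0 : (0 : Fin d → ℝ) ∈ interior Box)
    (f : (Fin d → ℝ) → ℝ) (hicpa : IsICPA d Box f) (hht : AtHeightOne d Box f)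
    (hax : ∀ x ∈ Box, (∃ (j : Fin d) (α : ℝ), x = Pi.single j α) → f x = 1) :
    ∀ x ∈ Box, f x = 1 :=
  identically_one_of_one_on_axes_general d hd Box h0 f hicpa hht hax

end
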